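/- Let G = N ⋊_φ H be the (outer) semidirect product of groups N and H with respect to an action φ : H → Aut(N). Let π : G → GL(F) be a representation of G on a real vector space F, let ρ : H → GL(W) be a representation of H on a real vector space W, and let Ψ : F → W be a linear map satisfying the equivariance constraint Ψ ∘ π(ι_H(h)) = ρ(h) ∘ Ψ for all h ∈ H, where ι_N : N → G and ι_H : H → G are the canonical embeddings. Define the convolution of f ∈ F with Ψ as the function [f ⋆ Ψ] : N → W, [f ⋆ Ψ](n) = Ψ(π(ι_N(n))⁻¹ f). Then for all t, n ∈ N, h ∈ H and f ∈ F, [π(ι_N(t)·ι_H(h)) f ⋆ Ψ](n) = ρ(h) [f ⋆ Ψ](φ(h⁻¹)(t⁻¹ n)). In other words, the output feature map transforms according to the representation induced from ρ: convolving an H-equivariant filter bank with a G-transformed input equals moving each output fiber to the new location (th)⁻¹ · n = φ(h⁻¹)(t⁻¹n) and transforming it by ρ(h), so the output feature space is G-steerable. -/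
import Mathlib


open SemidirectProduct

/-- Convolving an `H`-equivariant filter bank `Ψ` with a `G`-transformed input
transforms the output according to the representation induced from `ρ`:
for `G = N ⋊[φ] H`, a representation `π` of `G` on `F`, a fiber representation
`ρ` of `H` on `W` and a linear `Ψ : F → W` satisfying the equivariance
constraint `Ψ ∘ π(ι_H h) = ρ(h) ∘ Ψ`, the convolution
`[f ⋆ Ψ](n) = Ψ(π(ι_N n)⁻¹ f)` satisfies
`[π(ι_N t · ι_H h) f ⋆ Ψ](n) = ρ(h) [f ⋆ Ψ](φ(h⁻¹)(t⁻¹ n))`. -/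
theorem steerable_induced_transformation
    {N H F W : Type*} [Group N] [Group H] (φ : H →* MulAut N)
    [AddCommGroup F] [Module ℝ F] [AddCommGroup W] [Module ℝ W]
    (π : (N ⋊[φ] H) →* (F ≃ₗ[ℝ] F)) (ρ : H →* (W ≃ₗ[ℝ] W)) (Ψ : F →ₗ[ℝ] W)
    (hΨ : ∀ (h : H) (f : F), Ψ (π (inr h) f) = ρ h (Ψ f)) :
    ∀ (t n : N) (h : H) (f : F),
      Ψ ((π (inl n))⁻¹ (π (inl t * inr h) f)) =
        ρ h (Ψ ((π (inl (φ h⁻¹ (t⁻¹ * n))))⁻¹ f)) := by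
  intro t n h f
  have mul_apply : ∀ (a b : F ≃ₗ[ℝ] F) (x : F), (a * b) x = a (b x) := fun _ _ _ => rfl
  have keyg : ((inl n)⁻¹ * (inl t * inr h) : N ⋊[φ] H)
      = inr h * (inl (φ h⁻¹ (t⁻¹ * n)))⁻¹ := by
    ext <;> simp [mul_assoc]
  have key : Ψ (π ((inl n)⁻¹ * (inl t * inr h)) f)
      = Ψ (π ((inr h : N ⋊[φ] H) * (inl (φ h⁻¹ (t⁻¹ * n)))⁻¹) f) := by rw [keyg]
  simpa [map_mul, map_inv, mul_apply, hΨ] using key
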